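/- Let X₁, …, Xₙ be i.i.d. uniform on the unit circle 𝕊¹. Fix ε ∈ (0, 1) and set r = 1 − n^{ε−1} and r̃ = 2·n^{ε−1}. Then there exists a constant C > 0 such that for all sufficiently large n, P( #{ j ∈ {2, …, n} : X_j ∈ B(r·X₁, r̃) } ≥ n^{ε/2} ) ≥ 1 − C/n^{ε/2}. -/

import Mathlib

/-!
The events `Aⱼ = {Xⱼ ∈ B(w X₁, ρ)}`, `j ≠ 1`, are pairwise independent and all have
probability `q = unifCircle (B(w, ρ))`: since the uniform measure on the circle is invariant
under rotations, the position of `X₁` does not matter. For `w = 1 - δ`, `ρ = 2δ` the arc of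
angles `(0, δ/2]` lies in the ball, so `q ≥ δ / 4π` and the count of the `Aⱼ` has mean
`m ≥ n^ε / 8π` and, by pairwise independence, variance at most `m`. Chebyshev's inequality
bounds the probability that the count drops below `n^{ε/2} ≤ m/2` by `4/m = O(n^{-ε})`.
-/

open MeasureTheory ProbabilityTheory Filter Real
open scoped Classical

/-- The uniform probability measure on the unit circle `𝕊¹ ⊂ ℂ`. -/
noncomputable def unifCircle : Measure ℂ :=
  Measure.map (fun θ : ℝ => Complex.exp (θ * Complex.I))
    ((volume (Set.Ioc (0 : ℝ) (2 * π)))⁻¹ • volume.restrict (Set.Ioc (0 : ℝ) (2 * π)))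

open Finset Metric

instance fact_two_pi_pos : Fact (0 < 2 * π) := ⟨two_pi_pos⟩

lemma coe_toCircle_mk (x : ℝ) :
    ((AddCircle.toCircle (x : AddCircle (2 * π)) : Circle) : ℂ) = Complex.exp (x * Complex.I) := by
  rw [AddCircle.toCircle_apply_mk, div_self two_pi_pos.ne', one_mul, Circle.coe_exp]

lemma measurable_coe_toCircle :
    Measurable fun θ : AddCircle (2 * π) => (AddCircle.toCircle θ : ℂ) :=
  (continuous_subtype_val.comp AddCircle.continuous_toCircle).measurable

lemma unifCircle_eq_smul_map_toCircle :
    unifCircle = (ENNReal.ofReal (2 * π))⁻¹ •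
      (volume : Measure (AddCircle (2 * π))).map fun θ => (AddCircle.toCircle θ : ℂ) := by
  have hmk := AddCircle.measurePreserving_mk (2 * π) 0
  rw [zero_add] at hmk
  rw [unifCircle, volume_Ioc, sub_zero, Measure.map_smul, ← hmk.map_eq,
    Measure.map_map measurable_coe_toCircle hmk.measurable]
  simp_rw [Function.comp_def, coe_toCircle_mk]

instance : IsProbabilityMeasure unifCircle := by
  have : IsProbabilityMeasure ((volume (Set.Ioc (0 : ℝ) (2 * π)))⁻¹ •
      volume.restrict (Set.Ioc (0 : ℝ) (2 * π))) :=
    cond_isProbabilityMeasure_of_finite (by simp [pi_pos]) measure_Ioc_lt_top.ne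
  exact Measure.isProbabilityMeasure_map (by fun_prop)

lemma map_mul_unifCircle {x : ℂ} (hx : ‖x‖ = 1) : unifCircle.map (x * ·) = unifCircle := by
  obtain ⟨φ, rfl⟩ : ∃ φ : ℝ, Complex.exp (φ * Complex.I) = x :=
    ⟨Complex.arg x, by simpa [hx] using Complex.norm_mul_exp_arg_mul_I x⟩
  rw [unifCircle_eq_smul_map_toCircle, Measure.map_smul,
    Measure.map_map (by fun_prop) measurable_coe_toCircle]
  conv_rhs => rw [← map_add_right_eq_self volume (φ : AddCircle (2 * π)),
    Measure.map_map measurable_coe_toCircle (by fun_prop)]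
  congr 2
  funext θ
  simp [AddCircle.toCircle_add, coe_toCircle_mk, mul_comm]

section SecondMoment

variable {Ω ι : Type*} [MeasurableSpace Ω] {P : Measure Ω}

lemma ProbabilityTheory.IndepSet.indepFun_indicator_one {A B : Set Ω} (h : IndepSet A B P) :
    IndepFun (A.indicator (1 : Ω → ℝ)) (B.indicator (1 : Ω → ℝ)) P := by
  have hmeas : ∀ C : Set Ω, MeasurableSpace.comap (C.indicator (1 : Ω → ℝ)) inferInstance ≤
      MeasurableSpace.generateFrom {C} := fun C =>
    (measurable_const.indicator
      (MeasurableSpace.measurableSet_generateFrom (Set.mem_singleton C))).comap_le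
  rw [IndepFun_iff_Indep]
  exact indep_of_indep_of_le ((IndepSet_iff_Indep A B P).1 h) (hmeas A) (hmeas B)

variable [IsProbabilityMeasure P]

lemma variance_indicator_one_le {A : Set Ω} (hA : MeasurableSet A) :
    variance (A.indicator (1 : Ω → ℝ)) P ≤ P.real A := by
  have hsq : A.indicator (1 : Ω → ℝ) ^ 2 = A.indicator 1 := by
    ext ω; by_cases hω : ω ∈ A <;> simp [hω]
  calc variance (A.indicator (1 : Ω → ℝ)) P ≤ P[A.indicator 1 ^ 2] :=
        variance_le_expectation_sq ((measurable_const.indicator hA).aestronglyMeasurable)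
    _ = P.real A := by rw [hsq, integral_indicator_one hA]

lemma one_sub_div_sq_le_measureReal_lt_card (s : Finset ι) {A : ι → Set Ω}
    (hA : ∀ i, MeasurableSet (A i))
    (hindep : (s : Set ι).Pairwise fun i j => IndepSet (A i) (A j) P) {c : ℝ} (hc : 0 < c) :
    1 - (∑ i ∈ s, P.real (A i)) / c ^ 2 ≤
      P.real {ω | ∑ i ∈ s, P.real (A i) - c < #{i ∈ s | ω ∈ A i}} := by
  set m := ∑ i ∈ s, P.real (A i)
  set S := ∑ i ∈ s, (A i).indicator (1 : Ω → ℝ)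
  have hcard (ω : Ω) : (#{i ∈ s | ω ∈ A i} : ℝ) = S ω := by
    rw [Finset.card_filter]
    push_cast
    simp [S, Finset.sum_apply, Set.indicator_apply]
  have hS : MemLp S 2 P :=
    memLp_finsetSum' s fun i _ => memLp_indicator_const 2 (hA i) 1 (Or.inr (measure_ne_top P _))
  have hmean : P[S] = m := by
    simp only [S, Finset.sum_apply]
    rw [integral_finsetSum s fun i _ => (integrable_const 1).indicator (hA i)]
    exact Finset.sum_congr rfl fun i _ => integral_indicator_one (hA i)
  have hvar : variance S P ≤ m := by
    rw [IndepFun.variance_sum (X := fun i => (A i).indicator (1 : Ω → ℝ))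
      (fun i _ => memLp_indicator_const 2 (hA i) 1 (Or.inr (measure_ne_top P _)))
      fun i hi j hj hij => IndepSet.indepFun_indicator_one (hindep hi hj hij)]
    exact Finset.sum_le_sum fun i _ => variance_indicator_one_le (hA i)
  have hbad : P.real {ω | S ω ≤ m - c} ≤ m / c ^ 2 := calc
    _ ≤ P.real {ω | c ≤ |S ω - P[S]|} := by
      refine measureReal_mono fun ω (hω : S ω ≤ m - c) => ?_
      rw [Set.mem_ofPred_eq, hmean, abs_sub_comm]
      exact le_abs.2 (Or.inl (by linarith))
    _ ≤ variance S P / c ^ 2 :=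
      ENNReal.toReal_le_of_le_ofReal (div_nonneg (variance_nonneg _ _) (sq_nonneg _))
        (meas_ge_le_variance_div_sq hS hc)
    _ ≤ m / c ^ 2 := by gcongr
  have hgood : {ω | m - c < #{i ∈ s | ω ∈ A i}} = {ω | S ω ≤ m - c}ᶜ := by
    ext ω; simp [hcard]
  rw [hgood, probReal_compl_eq_one_sub₀ (nullMeasurableSet_le hS.1.aemeasurable aemeasurable_const)]
  linarith

end SecondMoment

lemma unifCircle_ball_mul {x : ℂ} (hx : ‖x‖ = 1) (w : ℂ) (ρ : ℝ) :
    unifCircle (ball (w * x) ρ) = unifCircle (ball w ρ) := by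
  have hpre : (x * ·) ⁻¹' ball (w * x) ρ = ball w ρ := by
    ext z
    simp only [Set.mem_preimage, mem_ball, dist_eq_norm]
    rw [show x * z - w * x = x * (z - w) by ring, norm_mul, hx, one_mul]
  conv_lhs => rw [← map_mul_unifCircle hx, Measure.map_apply (by fun_prop) measurableSet_ball, hpre]

lemma ae_norm_eq_one_unifCircle : ∀ᵐ z ∂unifCircle, ‖z‖ = 1 := by
  rw [unifCircle, ae_map_iff (by fun_prop) (measurableSet_eq_fun (by fun_prop) (by fun_prop))]
  exact Eventually.of_forall Complex.norm_exp_ofReal_mul_I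

lemma div_le_unifCircle_real_ball_one_sub {δ : ℝ} (hδ₀ : 0 < δ) (hδ₁ : δ ≤ 1) :
    δ / (4 * π) ≤ unifCircle.real (ball ((1 - δ : ℝ) : ℂ) (2 * δ)) := by
  have harc : Set.Ioc 0 (δ / 2) ⊆
      (fun θ : ℝ => Complex.exp (θ * Complex.I)) ⁻¹' ball ((1 - δ : ℝ) : ℂ) (2 * δ) := by
    intro θ ⟨hθ₀, hθ⟩
    rw [Set.mem_preimage, mem_ball, dist_eq_norm]
    have hchord : ‖Complex.exp (θ * Complex.I) - 1‖ ≤ θ := by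
      simpa [mul_comm, abs_of_pos hθ₀] using Real.norm_exp_I_mul_ofReal_sub_one_le (x := θ)
    calc ‖Complex.exp (θ * Complex.I) - ((1 - δ : ℝ) : ℂ)‖
        = ‖(Complex.exp (θ * Complex.I) - 1) + (δ : ℂ)‖ := by push_cast; ring_nf
      _ ≤ θ + δ := (norm_add_le _ _).trans (by simp [abs_of_pos hδ₀, hchord])
      _ < 2 * δ := by linarith
  have hle : ENNReal.ofReal (δ / (4 * π)) ≤ unifCircle (ball ((1 - δ : ℝ) : ℂ) (2 * δ)) := calc
    ENNReal.ofReal (δ / (4 * π))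
        = (volume (Set.Ioc (0 : ℝ) (2 * π)))⁻¹ *
            volume (Set.Ioc 0 (δ / 2) ∩ Set.Ioc 0 (2 * π)) := by
      rw [Set.inter_eq_left.2 (Set.Ioc_subset_Ioc_right (by linarith [pi_gt_three])),
        volume_Ioc, volume_Ioc, sub_zero, sub_zero, ← ENNReal.ofReal_inv_of_pos (by positivity),
        ← ENNReal.ofReal_mul (by positivity)]
      congr 1
      field_simp
      ring
    _ ≤ _ := by
      rw [unifCircle, Measure.map_apply (by fun_prop) measurableSet_ball, Measure.smul_apply,
        smul_eq_mul, Measure.restrict_apply' measurableSet_Ioc]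
      gcongr
  exact (ENNReal.ofReal_le_iff_le_toReal (measure_ne_top _ _)).1 hle

lemma MeasureTheory.Measure.prod_apply_of_ae_section_eq {α β : Type*}
    [MeasurableSpace α] [MeasurableSpace β]
    {μ : Measure α} [IsProbabilityMeasure μ] {ν : Measure β} [SFinite ν] {S : Set (α × β)}
    (hS : MeasurableSet S) {c : ENNReal} (h : ∀ᵐ x ∂μ, ν (Prod.mk x ⁻¹' S) = c) :
    μ.prod ν S = c := by
  rw [Measure.prod_apply hS, lintegral_congr_ae h, lintegral_const, measure_univ, mul_one]

section IidUniform

variable {Ω ι : Type*} [MeasurableSpace Ω] {P : Measure Ω} [IsProbabilityMeasure P]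
  {X : ι → Ω → ℂ}

lemma measurableSet_mem_ball_mul (hmeas : ∀ i, Measurable (X i)) (w : ℂ) (ρ : ℝ) (i j : ι) :
    MeasurableSet {ω | X j ω ∈ ball (w * X i ω) ρ} :=
  measurableSet_lt ((hmeas j).dist ((hmeas i).const_mul w)) measurable_const

lemma map_prodMk_eq_unifCircle_prod (hmeas : ∀ i, Measurable (X i)) (hindep : iIndepFun X P)
    (hdist : ∀ i, P.map (X i) = unifCircle) {i j : ι} (hij : i ≠ j) :
    P.map (fun ω => (X i ω, X j ω)) = unifCircle.prod unifCircle := by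
  rw [(indepFun_iff_map_prod_eq_prod_map_map (hmeas i).aemeasurable
    (hmeas j).aemeasurable).1 (hindep.indepFun hij), hdist, hdist]

lemma measure_mem_ball_mul_eq (hmeas : ∀ i, Measurable (X i)) (hindep : iIndepFun X P)
    (hdist : ∀ i, P.map (X i) = unifCircle) (w : ℂ) (ρ : ℝ) {i j : ι} (hij : i ≠ j) :
    P {ω | X j ω ∈ ball (w * X i ω) ρ} = unifCircle (ball w ρ) := by
  have hS : MeasurableSet {p : ℂ × ℂ | p.2 ∈ ball (w * p.1) ρ} :=
    measurableSet_lt (f := fun p : ℂ × ℂ => dist p.2 (w * p.1)) (by fun_prop) measurable_const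
  change P ((fun ω => (X i ω, X j ω)) ⁻¹' {p : ℂ × ℂ | p.2 ∈ ball (w * p.1) ρ}) = _
  rw [← Measure.map_apply ((hmeas i).prodMk (hmeas j)) hS,
    map_prodMk_eq_unifCircle_prod hmeas hindep hdist hij]
  refine Measure.prod_apply_of_ae_section_eq hS ?_
  filter_upwards [ae_norm_eq_one_unifCircle] with x hx using unifCircle_ball_mul hx w ρ

lemma indepSet_mem_ball_mul (hmeas : ∀ i, Measurable (X i)) (hindep : iIndepFun X P)
    (hdist : ∀ i, P.map (X i) = unifCircle) (w : ℂ) (ρ : ℝ) {i j k : ι} (hij : i ≠ j)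
    (hik : i ≠ k) (hjk : j ≠ k) :
    IndepSet {ω | X j ω ∈ ball (w * X i ω) ρ} {ω | X k ω ∈ ball (w * X i ω) ρ} P := by
  rw [indepSet_iff_measure_inter_eq_mul (measurableSet_mem_ball_mul hmeas w ρ i j)
    (measurableSet_mem_ball_mul hmeas w ρ i k) P,
    measure_mem_ball_mul_eq hmeas hindep hdist w ρ hij,
    measure_mem_ball_mul_eq hmeas hindep hdist w ρ hik]
  have hS : MeasurableSet
      {p : ℂ × ℂ × ℂ | p.2.1 ∈ ball (w * p.1) ρ ∧ p.2.2 ∈ ball (w * p.1) ρ} :=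
    (measurableSet_lt (f := fun p : ℂ × ℂ × ℂ => dist p.2.1 (w * p.1)) (by fun_prop)
      measurable_const).inter
      (measurableSet_lt (f := fun p : ℂ × ℂ × ℂ => dist p.2.2 (w * p.1)) (by fun_prop)
        measurable_const)
  have hlaw : P.map (fun ω => (X i ω, X j ω, X k ω)) =
      unifCircle.prod (unifCircle.prod unifCircle) := by
    rw [(indepFun_iff_map_prod_eq_prod_map_map (hmeas i).aemeasurable
      ((hmeas j).prodMk (hmeas k)).aemeasurable).1
      (hindep.indepFun_prodMk hmeas j k i hij.symm hik.symm).symm, hdist,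
      map_prodMk_eq_unifCircle_prod hmeas hindep hdist hjk]
  change P ((fun ω => (X i ω, X j ω, X k ω)) ⁻¹'
    {p : ℂ × ℂ × ℂ | p.2.1 ∈ ball (w * p.1) ρ ∧ p.2.2 ∈ ball (w * p.1) ρ}) = _
  rw [← Measure.map_apply ((hmeas i).prodMk ((hmeas j).prodMk (hmeas k))) hS, hlaw]
  refine Measure.prod_apply_of_ae_section_eq hS ?_
  filter_upwards [ae_norm_eq_one_unifCircle] with x hx
  change (unifCircle.prod unifCircle) (ball (w * x) ρ ×ˢ ball (w * x) ρ) = _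
  rw [Measure.prod_prod, unifCircle_ball_mul hx]

lemma one_sub_div_sq_le_measureReal_lt_card_mem_ball (hmeas : ∀ i, Measurable (X i))
    (hindep : iIndepFun X P) (hdist : ∀ i, P.map (X i) = unifCircle) (w : ℂ) (ρ : ℝ)
    {i : ι} {s : Finset ι} (hi : i ∉ s) {c : ℝ} (hc : 0 < c) :
    1 - #s * unifCircle.real (ball w ρ) / c ^ 2 ≤
      P.real {ω | #s * unifCircle.real (ball w ρ) - c < #{j ∈ s | X j ω ∈ ball (w * X i ω) ρ}} := by
  have hne : ∀ j ∈ s, i ≠ j := fun j hj => (ne_of_mem_of_not_mem hj hi).symm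
  have hq : ∀ j ∈ s, P.real {ω | X j ω ∈ ball (w * X i ω) ρ} = unifCircle.real (ball w ρ) :=
    fun j hj => by
      rw [measureReal_def, measure_mem_ball_mul_eq hmeas hindep hdist w ρ (hne j hj)]; rfl
  have hcount := one_sub_div_sq_le_measureReal_lt_card s (measurableSet_mem_ball_mul hmeas w ρ i)
    (fun j hj k hk hjk => indepSet_mem_ball_mul hmeas hindep hdist w ρ (hne j hj) (hne k hk) hjk) hc
  rwa [Finset.sum_congr rfl hq, Finset.sum_const, nsmul_eq_mul] at hcount

end IidUniform

lemma sq_rpow_le_mul_card_Icc_mul_unifCircle_real {n : ℕ} (hn : 2 ≤ n) {ε : ℝ} (hε : ε ≤ 1) :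
    ((n : ℝ) ^ (ε / 2)) ^ 2 ≤ 8 * π * (#(Icc 2 n) *
      unifCircle.real (ball ((1 - (n : ℝ) ^ (ε - 1) : ℝ) : ℂ) (2 * (n : ℝ) ^ (ε - 1)))) := by
  have hn2 : (2 : ℝ) ≤ n := by exact_mod_cast hn
  set δ := (n : ℝ) ^ (ε - 1)
  have hδ₀ : 0 < δ := by positivity
  have hδ₁ : δ ≤ 1 := rpow_le_one_of_one_le_of_nonpos (by linarith) (by linarith)
  have hcard : (n : ℝ) / 2 ≤ #(Icc 2 n) := by
    rw [Nat.card_Icc, Nat.cast_sub (by omega)]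
    push_cast
    linarith
  have hnδ : ((n : ℝ) ^ (ε / 2)) ^ 2 = n * δ := by
    rw [← rpow_natCast, ← rpow_mul (by positivity), show ε / 2 * ((2 : ℕ) : ℝ) = 1 + (ε - 1) by
      push_cast; ring, rpow_add (by positivity), rpow_one]
  calc ((n : ℝ) ^ (ε / 2)) ^ 2 = 8 * π * ((n / 2) * (δ / (4 * π))) := by
        rw [hnδ]; field_simp; ring
    _ ≤ _ := by
        gcongr 8 * π * ?_
        exact mul_le_mul hcard (div_le_unifCircle_real_ball_one_sub hδ₀ hδ₁) (by positivity)
          (by positivity)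

lemma div_sq_sub_le_of_sq_le {m t K : ℝ} (ht : 1 ≤ t) (hK : 0 < K) (htm : t ^ 2 ≤ K * m)
    (h2t : 2 * t ≤ m) : m / (m - t) ^ 2 ≤ 4 * K / t := by
  have hm : 0 < m := by linarith
  calc m / (m - t) ^ 2 ≤ 4 / m := by
        rw [div_le_div_iff₀ (by nlinarith) hm]
        nlinarith
    _ ≤ 4 * K / t ^ 2 := by
        rw [div_le_div_iff₀ hm (by positivity)]
        linarith
    _ ≤ 4 * K / t := div_le_div_of_nonneg_left (by positivity) (by positivity) (by nlinarith)

/-- For i.i.d. roots uniform on the unit circle, `ε ∈ (0, 1)`, `r = 1 - n^{ε-1}` and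
`r̃ = 2 n^{ε-1}`, the ball `B(r X₁, r̃)` contains at least `n^{ε/2}` of the points
`X₂, …, Xₙ` with probability at least `1 - C/n^{ε/2}` for all large `n`. -/
theorem many_roots_in_ball_unifCircle
    {Ω : Type*} [MeasurableSpace Ω] (P : Measure Ω) [IsProbabilityMeasure P]
    (X : ℕ → Ω → ℂ) (hmeas : ∀ i, Measurable (X i))
    (hindep : iIndepFun X P)
    (hdist : ∀ i, Measure.map (X i) P = unifCircle)
    (ε : ℝ) (hε₀ : 0 < ε) (hε₁ : ε < 1) :
    ∃ C : ℝ, 0 < C ∧ ∀ᶠ n : ℕ in atTop,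
      1 - C / (n : ℝ) ^ (ε / 2) ≤
        (P {ω | (n : ℝ) ^ (ε / 2) ≤
          (((Finset.Icc 2 n).filter fun j =>
            X j ω ∈ Metric.ball (((1 - (n : ℝ) ^ (ε - 1) : ℝ) : ℂ) * X 1 ω)
              (2 * (n : ℝ) ^ (ε - 1))).card : ℝ)}).toReal := by
  refine ⟨4 * (8 * π), by positivity, ?_⟩
  have htend : Tendsto (fun n : ℕ => (n : ℝ) ^ (ε / 2)) atTop atTop :=
    (tendsto_rpow_atTop (by positivity)).comp tendsto_natCast_atTop_atTop
  filter_upwards [eventually_ge_atTop 2, htend.eventually_ge_atTop (16 * π)] with n hn ht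
  set t := (n : ℝ) ^ (ε / 2)
  set δ := (n : ℝ) ^ (ε - 1)
  set m := (#(Icc 2 n) : ℝ) * unifCircle.real (ball ((1 - δ : ℝ) : ℂ) (2 * δ))
  have hm : t ^ 2 ≤ 8 * π * m := sq_rpow_le_mul_card_Icc_mul_unifCircle_real hn hε₁.le
  have h2t : 2 * t ≤ m := by nlinarith [pi_pos]
  have hcount := one_sub_div_sq_le_measureReal_lt_card_mem_ball hmeas hindep hdist
    ((1 - δ : ℝ) : ℂ) (2 * δ) (i := 1) (s := Icc 2 n) (by simp) (c := m - t) (by linarith [pi_pos])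
  rw [sub_sub_cancel] at hcount
  calc 1 - 4 * (8 * π) / t ≤ 1 - m / (m - t) ^ 2 := by
        gcongr ?_ - ?_
        exact div_sq_sub_le_of_sq_le (by linarith [pi_gt_three]) (by positivity) hm h2t
    _ ≤ P.real {ω | t < #{j ∈ Icc 2 n | X j ω ∈ ball (((1 - δ : ℝ) : ℂ) * X 1 ω) (2 * δ)}} :=
        hcount
    _ ≤ _ := measureReal_mono fun ω (h : t < _) => h.le
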